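/- Let f : [a,b] → ℝ be nonnegative, integrable, and subadditive in the P-function sense (f(λx+(1-λ)y) ≤ f(x)+f(y) for all λ ∈ [0,1]) with a < b. Then for every α > 0: (Γ(α+1)/(b-a)^α)[J_{a+}^α f(b) + J_{b-}^α f(a)] ≤ 2(f(a)+f(b)). -/

import Mathlib

/-!
Taking `x = y` in the defining inequality gives `f x ≤ 2 f x`, so a P-function is nonnegative;
writing `t ∈ [a, b]` as a convex combination of `a` and `b` gives `f t ≤ f a + f b`.
Hence each Riemann–Liouville integral is at most `(f a + f b) ∫ (b - t)^(α-1) dt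
= (f a + f b) (b - a)^α / α`, and `Γ(α + 1) = α Γ(α)` turns the sum into `2 (f a + f b)`.
-/

open MeasureTheory intervalIntegral Set

/-- When `w * f` is not integrable, the left side is the junk value `0`. -/
theorem integral_mul_le_const_mul_integral {a b c : ℝ} {w f : ℝ → ℝ} (hab : a ≤ b)
    (hw : IntervalIntegrable w volume a b) (hw0 : ∀ t ∈ Icc a b, 0 ≤ w t)
    (hf0 : ∀ t ∈ Icc a b, 0 ≤ f t) (hfc : ∀ t ∈ Icc a b, f t ≤ c) :
    ∫ t in a..b, w t * f t ≤ c * ∫ t in a..b, w t := by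
  rw [← intervalIntegral.integral_const_mul, integral_of_le hab, integral_of_le hab]
  refine integral_mono_of_nonneg ?_ (hw.1.const_mul c) ?_ <;>
    refine ae_restrict_of_forall_mem measurableSet_Ioc fun t ht => ?_
  all_goals replace ht := Ioc_subset_Icc_self ht
  · exact mul_nonneg (hw0 t ht) (hf0 t ht)
  · show w t * f t ≤ c * w t
    rw [mul_comm c]
    exact mul_le_mul_of_nonneg_left (hfc t ht) (hw0 t ht)

/-- The class `P(s)` of the paper. -/
def IsPFunctionOn (s : Set ℝ) (f : ℝ → ℝ) : Prop :=
  ∀ x ∈ s, ∀ y ∈ s, ∀ l : ℝ, 0 ≤ l → l ≤ 1 → f (l * x + (1 - l) * y) ≤ f x + f y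

namespace IsPFunctionOn

variable {s : Set ℝ} {f : ℝ → ℝ}

theorem nonneg (hP : IsPFunctionOn s f) {x : ℝ} (hx : x ∈ s) : 0 ≤ f x := by
  simpa using hP x hx x hx 1 zero_le_one le_rfl

theorem le_add_of_mem_Icc {a b t : ℝ} (hP : IsPFunctionOn (Icc a b) f) (ht : t ∈ Icc a b) :
    f t ≤ f a + f b := by
  have hab : a ≤ b := ht.1.trans ht.2
  obtain ⟨l, m, hl, hm, hlm, rfl⟩ := (segment_eq_Icc hab).symm ▸ ht
  obtain rfl : m = 1 - l := by linarith
  exact hP a (left_mem_Icc.2 hab) b (right_mem_Icc.2 hab) l hl (by linarith)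

theorem integral_mul_le {a b : ℝ} {w : ℝ → ℝ} (hP : IsPFunctionOn (Icc a b) f) (hab : a ≤ b)
    (hw : IntervalIntegrable w volume a b) (hw0 : ∀ t ∈ Icc a b, 0 ≤ w t) :
    ∫ t in a..b, w t * f t ≤ (f a + f b) * ∫ t in a..b, w t :=
  integral_mul_le_const_mul_integral hab hw hw0 (fun _ => hP.nonneg) fun _ =>
    hP.le_add_of_mem_Icc

end IsPFunctionOn

section RiemannLiouvilleKernel

variable {a b α : ℝ}

theorem intervalIntegrable_sub_rpow (hα : 0 < α) :
    IntervalIntegrable (fun t => (b - t) ^ (α - 1)) volume a b := by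
  simpa using ((intervalIntegrable_rpow' (a := 0) (b := b - a) (by linarith)).comp_sub_left b).symm

theorem intervalIntegrable_rpow_sub (hα : 0 < α) :
    IntervalIntegrable (fun t => (t - a) ^ (α - 1)) volume a b := by
  simpa using (intervalIntegrable_rpow' (a := 0) (b := b - a) (by linarith)).comp_sub_right a

theorem integral_rpow_sub_one (hα : 0 < α) :
    ∫ x in (0 : ℝ)..(b - a), x ^ (α - 1) = (b - a) ^ α / α := by
  rw [integral_rpow (Or.inl (by linarith)), Real.zero_rpow (by linarith)]
  ring_nf

theorem integral_sub_rpow (hα : 0 < α) :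
    ∫ t in a..b, (b - t) ^ (α - 1) = (b - a) ^ α / α := by
  rw [integral_comp_sub_left (fun x => x ^ (α - 1)) b]
  simpa using integral_rpow_sub_one hα

theorem integral_rpow_sub (hα : 0 < α) :
    ∫ t in a..b, (t - a) ^ (α - 1) = (b - a) ^ α / α := by
  rw [integral_comp_sub_right (fun x => x ^ (α - 1)) a]
  simpa using integral_rpow_sub_one hα

end RiemannLiouvilleKernel

theorem fractional_P_function_upper_general (a b α : ℝ) (f : ℝ → ℝ)
    (hab : a < b) (hα : 0 < α)
    (hP : ∀ x ∈ Set.Icc a b, ∀ y ∈ Set.Icc a b, ∀ l : ℝ, 0 ≤ l → l ≤ 1 →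
      f (l * x + (1 - l) * y) ≤ f x + f y) :
    Real.Gamma (α + 1) / (b - a) ^ α *
      ((1 / Real.Gamma α) * (∫ t in a..b, (b - t) ^ (α - 1) * f t) +
       (1 / Real.Gamma α) * (∫ t in a..b, (t - a) ^ (α - 1) * f t)) ≤
      2 * (f a + f b) := by
  have hP : IsPFunctionOn (Icc a b) f := hP
  have hleft : ∫ t in a..b, (b - t) ^ (α - 1) * f t ≤ (f a + f b) * ((b - a) ^ α / α) :=
    (hP.integral_mul_le hab.le (intervalIntegrable_sub_rpow hα)
      fun _ ht => Real.rpow_nonneg (sub_nonneg.2 ht.2) _).trans_eq (by rw [integral_sub_rpow hα])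
  have hright : ∫ t in a..b, (t - a) ^ (α - 1) * f t ≤ (f a + f b) * ((b - a) ^ α / α) :=
    (hP.integral_mul_le hab.le (intervalIntegrable_rpow_sub hα)
      fun _ ht => Real.rpow_nonneg (sub_nonneg.2 ht.1) _).trans_eq (by rw [integral_rpow_sub hα])
  have hΓ : 0 < Real.Gamma α := Real.Gamma_pos_of_pos hα
  have hpow : 0 < (b - a) ^ α := Real.rpow_pos_of_pos (by linarith) α
  calc Real.Gamma (α + 1) / (b - a) ^ α *
        ((1 / Real.Gamma α) * (∫ t in a..b, (b - t) ^ (α - 1) * f t) +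
         (1 / Real.Gamma α) * (∫ t in a..b, (t - a) ^ (α - 1) * f t))
      = α / (b - a) ^ α * ((∫ t in a..b, (b - t) ^ (α - 1) * f t) +
          ∫ t in a..b, (t - a) ^ (α - 1) * f t) := by
        rw [Real.Gamma_add_one hα.ne']; field_simp
    _ ≤ α / (b - a) ^ α *
          ((f a + f b) * ((b - a) ^ α / α) + (f a + f b) * ((b - a) ^ α / α)) := by
        gcongr
    _ = 2 * (f a + f b) := by field_simp; ring

theorem fractional_P_function_upper (a b α : ℝ) (f : ℝ → ℝ)
    (hab : a < b) (hα : 0 < α)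
    (hnonneg : ∀ x ∈ Set.Icc a b, 0 ≤ f x)
    (hP : ∀ x ∈ Set.Icc a b, ∀ y ∈ Set.Icc a b, ∀ l : ℝ, 0 ≤ l → l ≤ 1 →
      f (l * x + (1 - l) * y) ≤ f x + f y)
    (hint : IntervalIntegrable f MeasureTheory.volume a b) :
    Real.Gamma (α + 1) / (b - a) ^ α *
      ((1 / Real.Gamma α) * (∫ t in a..b, (b - t) ^ (α - 1) * f t) +
       (1 / Real.Gamma α) * (∫ t in a..b, (t - a) ^ (α - 1) * f t)) ≤
      2 * (f a + f b) :=
  fractional_P_function_upper_general a b α f hab hα hP
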